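/- Let X be a Sturmian subshift over {0,1}, i.e. a subshift with word complexity p_n(X) = n + 1 for all n ≥ 1. Then for every fixed k ≥ 1, limsup_{n→∞} N_{σ,X}(2^{-(k-1)}, n) / n^χ equals ∞ for χ < 1, equals 1 for χ = 1, and equals 0 for χ > 1; consequently the topological slow entropy of X at polynomial scale a_χ(n) = n^χ equals 1. -/

import Mathlib

/-!
Two points of `A^ℤ` are `2^{-k}`-close iff they agree on `[-k, k]`. Hence an `(ε, n)`-Bowen ball
with `ε ≥ 2^{-k}` contains every point of `X` carrying the same word on `[-k, n + k)` as its center,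
while a ball with `ε ≤ 1` only contains points carrying the same word on `[0, n)`. By shift
invariance the words seen at any position are those of the language of `X`, so
`p_n(X) ≤ N(ε, n) ≤ p_{n+2k}(X)`, i.e. `n + 1 ≤ N(ε, n) ≤ n + 2k + 1` for a Sturmian subshift.
Thus `N(ε, n) / n → 1` for every `ε ∈ (0, 1]`, which gives all three limsups, and the critical
exponent is `1` at every such scale.
-/

open Set Filter

/-- The left shift on bi-infinite sequences. -/
def shiftMap {A : Type*} : (ℤ → A) → (ℤ → A) := fun ω n => ω (n + 1)

open Classical in
/-- The standard metric on the full shift `A^ℤ`. -/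
noncomputable def shiftDist {A : Type*} (ω η : ℤ → A) : ℝ :=
  if ω = η then 0
  else (2 : ℝ) ^ (-((sInf {i : ℕ | ω (i : ℤ) ≠ η (i : ℤ) ∨ ω (-(i : ℤ)) ≠ η (-(i : ℤ))} : ℕ) : ℤ))

/-- The `(ε,n)`-Bowen ball (inside the subshift `X`) of the shift centered at `ω`. -/
def seqBowenBall {A : Type*} (X : Set (ℤ → A)) (n : ℕ) (ε : ℝ) (ω : ℤ → A) : Set (ℤ → A) :=
  {η ∈ X | ∀ i < n, shiftDist (shiftMap^[i] ω) (shiftMap^[i] η) < ε}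

/-- `N_{σ,X}(ε,n)`: minimal number of `(ε,n)`-Bowen balls (centers in `X`) covering `X`. -/
noncomputable def coverNum {A : Type*} (X : Set (ℤ → A)) (ε : ℝ) (n : ℕ) : ℕ :=
  sInf {m : ℕ | ∃ F : Finset (ℤ → A), ↑F ⊆ X ∧ F.card = m ∧
    X ⊆ ⋃ ω ∈ F, seqBowenBall X n ε ω}

/-- `p_m(X)`: the number of words of length `m` in the language of `X`. -/
noncomputable def wordCount {A : Type*} (X : Set (ℤ → A)) (m : ℕ) : ℕ :=
  Nat.card {w : Fin m → A | ∃ ω ∈ X, ∀ i : Fin m, ω ((i : ℕ) : ℤ) = w i}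

open Topology

section Shift

variable {A : Type*}

lemma shiftMap_iterate_apply (ω : ℤ → A) (i : ℕ) (t : ℤ) :
    (shiftMap^[i] ω) t = ω (t + i) := by
  induction i generalizing t with
  | zero => simp
  | succ j ih =>
    rw [Function.iterate_succ_apply', shiftMap, ih]
    congr 1; push_cast; ring

lemma shiftDist_lt_two_zpow_iff (ω η : ℤ → A) (k : ℕ) :
    shiftDist ω η < (2 : ℝ) ^ (-(k : ℤ)) ↔ ∀ j : ℤ, |j| ≤ k → ω j = η j := by
  classical
  have hagree : (∀ j : ℤ, |j| ≤ k → ω j = η j) ↔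
      ∀ i ≤ k, ¬(ω (i : ℤ) ≠ η (i : ℤ) ∨ ω (-(i : ℤ)) ≠ η (-(i : ℤ))) := by
    refine ⟨fun h i hi => ?_, fun h j hj => ?_⟩
    · push Not
      exact ⟨h i (by simpa using hi), h (-i) (by simpa using hi)⟩
    · have := not_or.1 (h j.natAbs (by rw [Int.abs_eq_natAbs] at hj; omega))
      rcases Int.natAbs_eq j with hj' | hj' <;> rw [hj'] <;> tauto
  rw [hagree, shiftDist]
  split_ifs with h
  · subst h
    simp only [ne_eq, not_true_eq_false, or_self, not_false_eq_true, implies_true, iff_true]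
    positivity
  · obtain ⟨t, ht⟩ := Function.ne_iff.1 h
    have hne : {i : ℕ | ω i ≠ η i ∨ ω (-(i : ℤ)) ≠ η (-(i : ℤ))}.Nonempty :=
      ⟨t.natAbs, by
        rw [Set.mem_ofPred_eq]
        rcases Int.natAbs_eq t with h' | h' <;> rw [← h'] <;> simp [ht]⟩
    rw [zpow_lt_zpow_iff_right₀ one_lt_two, neg_lt_neg_iff, Nat.cast_lt, ← not_le]
    refine ⟨fun hk i hi hi' => hk ((Nat.sInf_le hi').trans hi), fun h' hle => ?_⟩
    exact h' _ hle (Nat.sInf_mem hne)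

def windowAt (a : ℤ) (m : ℕ) (ω : ℤ → A) : Fin m → A := fun i => ω (i + a)

lemma windowAt_shiftMap_iterate (a : ℤ) (m j : ℕ) (ω : ℤ → A) :
    windowAt a m (shiftMap^[j] ω) = windowAt (a + j) m ω := by
  ext i
  simp only [windowAt, shiftMap_iterate_apply, add_assoc]

lemma wordCount_eq_ncard_image_windowAt (X : Set (ℤ → A)) (m : ℕ) :
    wordCount X m = (windowAt 0 m '' X).ncard := by
  rw [wordCount, Nat.card_coe_set_eq]
  congr
  ext w
  simp [windowAt, funext_iff]

lemma image_windowAt_add {X : Set (ℤ → A)} (hinv : shiftMap '' X = X) (a : ℤ) (m j : ℕ) :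
    windowAt (a + j) m '' X = windowAt a m '' X := by
  have hX : shiftMap^[j] '' X = X := by
    rw [Set.image_iterate_eq]
    exact Function.iterate_fixed hinv j
  conv_rhs => rw [← hX, Set.image_image]
  simp only [windowAt_shiftMap_iterate]

end Shift

section Cover

variable {A : Type*} {X : Set (ℤ → A)} {n : ℕ} {ε : ℝ}

def IsBowenCover (X : Set (ℤ → A)) (n : ℕ) (ε : ℝ) (F : Finset (ℤ → A)) : Prop :=
  ↑F ⊆ X ∧ X ⊆ ⋃ ω ∈ F, seqBowenBall X n ε ω

lemma coverNum_le_card {F : Finset (ℤ → A)} (hF : IsBowenCover X n ε F) :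
    coverNum X ε n ≤ F.card :=
  Nat.sInf_le ⟨F, hF.1, rfl, hF.2⟩

lemma le_coverNum {m : ℕ} (hex : ∃ F, IsBowenCover X n ε F)
    (h : ∀ F, IsBowenCover X n ε F → m ≤ F.card) : m ≤ coverNum X ε n := by
  obtain ⟨F, hFX, hcard, hcover⟩ :=
    Nat.sInf_mem (s := {m | ∃ F : Finset (ℤ → A), ↑F ⊆ X ∧ F.card = m ∧
      X ⊆ ⋃ ω ∈ F, seqBowenBall X n ε ω}) (by
        obtain ⟨F, hF⟩ := hex
        exact ⟨F.card, F, hF.1, rfl, hF.2⟩)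
  exact (h F ⟨hFX, hcover⟩).trans_eq hcard

lemma exists_isBowenCover_card_le_ncard_image {β : Type*} (f : (ℤ → A) → β)
    (hfin : (f '' X).Finite)
    (hball : ∀ ω ∈ X, ∀ η ∈ X, f ω = f η → η ∈ seqBowenBall X n ε ω) :
    ∃ F, IsBowenCover X n ε F ∧ F.card ≤ (f '' X).ncard := by
  obtain ⟨s, hsX, hbij⟩ := Set.exists_subset_bijOn X f
  have hsfin : s.Finite := Set.Finite.of_finite_image (hbij.image_eq ▸ hfin) hbij.injOn
  refine ⟨hsfin.toFinset, ⟨by simpa using hsX, fun η hη => ?_⟩, ?_⟩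
  · obtain ⟨ω, hωs, hfω⟩ := hbij.surjOn ⟨η, hη, rfl⟩
    exact Set.mem_iUnion₂.2 ⟨ω, hsfin.mem_toFinset.2 hωs, hball ω (hsX hωs) η hη hfω⟩
  · rw [← Set.ncard_eq_toFinset_card s hsfin, hbij.ncard_eq]

lemma ncard_image_le_card_of_isBowenCover {β : Type*} (f : (ℤ → A) → β)
    (hball : ∀ ω η, η ∈ seqBowenBall X n ε ω → f ω = f η)
    {F : Finset (ℤ → A)} (hF : IsBowenCover X n ε F) : (f '' X).ncard ≤ F.card := by
  have hsub : f '' X ⊆ f '' F := by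
    rintro _ ⟨η, hη, rfl⟩
    obtain ⟨ω, hωF, hηω⟩ := Set.mem_iUnion₂.1 (hF.2 hη)
    exact ⟨ω, hωF, hball ω η hηω⟩
  calc (f '' X).ncard ≤ (f '' F).ncard := Set.ncard_le_ncard hsub
    _ ≤ (F : Set (ℤ → A)).ncard := Set.ncard_image_le
    _ = F.card := Set.ncard_coe_finset F

end Cover

section Subshift

variable {A : Type*} {X : Set (ℤ → A)} {n : ℕ} {ε : ℝ}

lemma exists_two_zpow_neg_le (hε : 0 < ε) : ∃ k : ℕ, (2 : ℝ) ^ (-(k : ℤ)) ≤ ε := by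
  obtain ⟨k, hk⟩ := exists_pow_lt_of_lt_one hε one_half_lt_one
  refine ⟨k, le_of_eq_of_le ?_ hk.le⟩
  rw [zpow_neg, zpow_natCast, one_div, inv_pow]

lemma mem_seqBowenBall_of_windowAt_eq {k : ℕ} (hε : (2 : ℝ) ^ (-(k : ℤ)) ≤ ε)
    {ω η : ℤ → A} (hη : η ∈ X)
    (h : windowAt (-k) (n + 2 * k) ω = windowAt (-k) (n + 2 * k) η) :
    η ∈ seqBowenBall X n ε ω := by
  refine ⟨hη, fun i hi => ((shiftDist_lt_two_zpow_iff _ _ k).2 fun j hj => ?_).trans_le hε⟩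
  rw [shiftMap_iterate_apply, shiftMap_iterate_apply]
  rw [abs_le] at hj
  have hidx : (j + i + k).toNat < n + 2 * k := by omega
  have := congrFun h ⟨_, hidx⟩
  rwa [windowAt, windowAt, Int.toNat_of_nonneg (by omega), add_neg_cancel_right] at this

lemma windowAt_zero_eq_of_mem_seqBowenBall (hε : ε ≤ 1) {ω η : ℤ → A}
    (h : η ∈ seqBowenBall X n ε ω) : windowAt 0 n ω = windowAt 0 n η := by
  ext i
  have hdist := (h.2 i i.2).trans_le (hε.trans_eq (by norm_num : (1 : ℝ) = 2 ^ (-((0 : ℕ) : ℤ))))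
  simpa [windowAt, shiftMap_iterate_apply] using
    (shiftDist_lt_two_zpow_iff _ _ 0).1 hdist 0 (by simp)

variable [Finite A]

lemma exists_isBowenCover_card_le_wordCount (hinv : shiftMap '' X = X) {k : ℕ}
    (hε : (2 : ℝ) ^ (-(k : ℤ)) ≤ ε) :
    ∃ F, IsBowenCover X n ε F ∧ F.card ≤ wordCount X (n + 2 * k) := by
  obtain ⟨F, hF, hcard⟩ := exists_isBowenCover_card_le_ncard_image
    (windowAt (-k) (n + 2 * k)) (Set.toFinite (windowAt (-k) (n + 2 * k) '' X))
    (fun _ _ _ hη h => mem_seqBowenBall_of_windowAt_eq hε hη h)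
  refine ⟨F, hF, hcard.trans_eq ?_⟩
  rw [wordCount_eq_ncard_image_windowAt, ← image_windowAt_add hinv (-k) _ k, neg_add_cancel]

lemma wordCount_le_coverNum (hinv : shiftMap '' X = X) (hε₀ : 0 < ε) (hε₁ : ε ≤ 1) :
    wordCount X n ≤ coverNum X ε n := by
  obtain ⟨k, hk⟩ := exists_two_zpow_neg_le hε₀
  refine le_coverNum ((exists_isBowenCover_card_le_wordCount hinv hk).imp fun _ => And.left)
    fun F hF => ?_
  rw [wordCount_eq_ncard_image_windowAt]
  exact ncard_image_le_card_of_isBowenCover _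
    (fun _ _ h => windowAt_zero_eq_of_mem_seqBowenBall hε₁ h) hF

end Subshift

section Asymptotics

variable {u : ℕ → ℝ}

lemma tendsto_div_natCast_of_le_of_le_add (C : ℝ)
    (h : ∀ᶠ n : ℕ in atTop, (n : ℝ) ≤ u n ∧ u n ≤ n + C) :
    Tendsto (fun n => u n / n) atTop (𝓝 1) := by
  have hupper : Tendsto (fun n : ℕ => 1 + C / n) atTop (𝓝 1) := by
    simpa using (tendsto_const_div_atTop_nhds_zero_nat C).const_add 1
  refine tendsto_of_tendsto_of_tendsto_of_le_of_le' tendsto_const_nhds hupper ?_ ?_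
  all_goals
    filter_upwards [h, eventually_gt_atTop 0] with n hn hn₀
    have hn₀' : (0 : ℝ) < n := Nat.cast_pos.2 hn₀
  · rw [le_div_iff₀ hn₀', one_mul]
    exact hn.1
  · rw [div_le_iff₀ hn₀', add_mul, one_mul, div_mul_cancel₀ _ hn₀'.ne']
    exact hn.2

lemma div_rpow_eventuallyEq (χ : ℝ) :
    (fun n => u n / (n : ℝ) ^ χ) =ᶠ[atTop] fun n => u n / n * (n : ℝ) ^ (1 - χ) := by
  filter_upwards [eventually_gt_atTop 0] with n hn
  have hn' : (0 : ℝ) < n := Nat.cast_pos.2 hn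
  rw [Real.rpow_sub hn', Real.rpow_one]
  field_simp

variable {c : ℝ}

lemma limsup_div_eq (hu : Tendsto (fun n => u n / n) atTop (𝓝 c)) :
    limsup (fun n => ((u n / n : ℝ) : EReal)) atTop = c :=
  (EReal.tendsto_coe.2 hu).limsup_eq

lemma limsup_div_rpow_eq_top (hu : Tendsto (fun n => u n / n) atTop (𝓝 c)) (hc : 0 < c)
    {χ : ℝ} (hχ : χ < 1) :
    limsup (fun n => ((u n / (n : ℝ) ^ χ : ℝ) : EReal)) atTop = ⊤ := by
  have hpow : Tendsto (fun n : ℕ => (n : ℝ) ^ (1 - χ)) atTop atTop :=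
    (tendsto_rpow_atTop (by linarith)).comp tendsto_natCast_atTop_atTop
  have hdiv := (hu.pos_mul_atTop hc hpow).congr' (div_rpow_eventuallyEq χ).symm
  exact (EReal.tendsto_coe_atTop.comp hdiv).limsup_eq

lemma limsup_div_rpow_eq_zero (hu : Tendsto (fun n => u n / n) atTop (𝓝 c))
    {χ : ℝ} (hχ : 1 < χ) :
    limsup (fun n => ((u n / (n : ℝ) ^ χ : ℝ) : EReal)) atTop = 0 := by
  have hpow : Tendsto (fun n : ℕ => (n : ℝ) ^ (1 - χ)) atTop (𝓝 0) := by
    have := (tendsto_rpow_neg_atTop (by linarith : 0 < χ - 1)).comp tendsto_natCast_atTop_atTop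
    rw [neg_sub] at this
    exact this
  have hdiv := (hu.mul hpow).congr' (div_rpow_eventuallyEq χ).symm
  rw [mul_zero] at hdiv
  exact (EReal.tendsto_coe.2 hdiv).limsup_eq

lemma sSup_setOf_limsup_div_rpow_pos (hu : Tendsto (fun n => u n / n) atTop (𝓝 1)) :
    sSup {χ : ℝ | 0 ≤ χ ∧ 0 < limsup (fun n => ((u n / (n : ℝ) ^ χ : ℝ) : EReal)) atTop} = 1 := by
  suffices hset : {χ : ℝ | 0 ≤ χ ∧
      0 < limsup (fun n => ((u n / (n : ℝ) ^ χ : ℝ) : EReal)) atTop} = Icc 0 1 by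
    rw [hset, csSup_Icc zero_le_one]
  ext χ
  refine and_congr_right fun _ => ?_
  rcases lt_trichotomy χ 1 with hχ | rfl | hχ
  · simp [limsup_div_rpow_eq_top hu one_pos hχ, hχ.le]
  · simp [limsup_div_eq hu]
  · simp [limsup_div_rpow_eq_zero hu hχ, hχ]

end Asymptotics

lemma tendsto_coverNum_div_of_wordCount_eq {A : Type*} [Finite A] {X : Set (ℤ → A)}
    (hinv : shiftMap '' X = X) (hsturm : ∀ m : ℕ, 1 ≤ m → wordCount X m = m + 1) {ε : ℝ}
    (hε₀ : 0 < ε) (hε₁ : ε ≤ 1) :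
    Tendsto (fun n : ℕ => (coverNum X ε n : ℝ) / n) atTop (𝓝 1) := by
  obtain ⟨k, hk⟩ := exists_two_zpow_neg_le hε₀
  refine tendsto_div_natCast_of_le_of_le_add (2 * k + 1) ?_
  filter_upwards [eventually_ge_atTop 1] with n hn
  have hlower : n + 1 ≤ coverNum X ε n := hsturm n hn ▸ wordCount_le_coverNum hinv hε₀ hε₁
  obtain ⟨F, hF, hcard⟩ := exists_isBowenCover_card_le_wordCount (n := n) hinv hk
  have hupper : coverNum X ε n ≤ n + 2 * k + 1 :=
    (coverNum_le_card hF).trans (hcard.trans_eq (hsturm _ (by omega)))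
  constructor
  · exact_mod_cast (by omega : n ≤ coverNum X ε n)
  · exact_mod_cast hupper

theorem sturmian_top_slow_entropy_general
    (X : Set (ℤ → Fin 2)) (hinv : shiftMap '' X = X)
    (hsturm : ∀ m : ℕ, 1 ≤ m → wordCount X m = m + 1) :
    (∀ k : ℕ, 1 ≤ k →
      (∀ χ : ℝ, χ < 1 →
        limsup (fun n : ℕ =>
          (((coverNum X ((2 : ℝ) ^ (-((k : ℤ) - 1))) n : ℝ) / (n : ℝ) ^ χ : ℝ) : EReal))
          atTop = ⊤) ∧
      limsup (fun n : ℕ =>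
          (((coverNum X ((2 : ℝ) ^ (-((k : ℤ) - 1))) n : ℝ) / (n : ℝ) : ℝ) : EReal))
          atTop = 1 ∧
      (∀ χ : ℝ, 1 < χ →
        limsup (fun n : ℕ =>
          (((coverNum X ((2 : ℝ) ^ (-((k : ℤ) - 1))) n : ℝ) / (n : ℝ) ^ χ : ℝ) : EReal))
          atTop = 0)) ∧
    Tendsto (fun ε : ℝ =>
        sSup {χ : ℝ | 0 ≤ χ ∧ 0 < limsup (fun n : ℕ =>
          (((coverNum X ε n : ℝ) / (n : ℝ) ^ χ : ℝ) : EReal)) atTop})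
      (nhdsWithin 0 (Ioi 0)) (nhds 1) := by
  have hlim : ∀ ε : ℝ, 0 < ε → ε ≤ 1 →
      Tendsto (fun n : ℕ => (coverNum X ε n : ℝ) / n) atTop (𝓝 1) :=
    fun _ hε₀ hε₁ => tendsto_coverNum_div_of_wordCount_eq hinv hsturm hε₀ hε₁
  refine ⟨fun k hk => ?_, ?_⟩
  · have hkε := hlim ((2 : ℝ) ^ (-((k : ℤ) - 1))) (by positivity)
      (zpow_le_one_of_nonpos₀ one_le_two (by omega))
    refine ⟨fun χ hχ => limsup_div_rpow_eq_top hkε one_pos hχ, ?_,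
      fun χ hχ => limsup_div_rpow_eq_zero hkε hχ⟩
    rw [limsup_div_eq hkε, EReal.coe_one]
  · refine tendsto_const_nhds.congr' ?_
    filter_upwards [self_mem_nhdsWithin,
      eventually_nhdsWithin_of_eventually_nhds (Iic_mem_nhds one_pos)] with ε hε₀ hε₁
    exact (sSup_setOf_limsup_div_rpow_pos (hlim ε hε₀ hε₁)).symm

/-- For a Sturmian subshift `X` (word complexity `p_m(X) = m + 1`), for every `k ≥ 1` the
quantity `limsup N_{σ,X}(2^{-(k-1)}, n) / n^χ` is `∞` for `χ < 1`, is `1` for `χ = 1`, and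
is `0` for `χ > 1`; consequently the topological slow entropy at polynomial scale
`a_χ(n) = n^χ` equals `1`. -/
theorem sturmian_top_slow_entropy
    (X : Set (ℤ → Fin 2)) (hX : IsClosed X) (hinv : shiftMap '' X = X)
    (hsturm : ∀ m : ℕ, 1 ≤ m → wordCount X m = m + 1) :
    (∀ k : ℕ, 1 ≤ k →
      (∀ χ : ℝ, χ < 1 →
        limsup (fun n : ℕ =>
          (((coverNum X ((2 : ℝ) ^ (-((k : ℤ) - 1))) n : ℝ) / (n : ℝ) ^ χ : ℝ) : EReal))
          atTop = ⊤) ∧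
      limsup (fun n : ℕ =>
          (((coverNum X ((2 : ℝ) ^ (-((k : ℤ) - 1))) n : ℝ) / (n : ℝ) : ℝ) : EReal))
          atTop = 1 ∧
      (∀ χ : ℝ, 1 < χ →
        limsup (fun n : ℕ =>
          (((coverNum X ((2 : ℝ) ^ (-((k : ℤ) - 1))) n : ℝ) / (n : ℝ) ^ χ : ℝ) : EReal))
          atTop = 0)) ∧
    Tendsto (fun ε : ℝ =>
        sSup {χ : ℝ | 0 ≤ χ ∧ 0 < limsup (fun n : ℕ =>
          (((coverNum X ε n : ℝ) / (n : ℝ) ^ χ : ℝ) : EReal)) atTop})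
      (nhdsWithin 0 (Ioi 0)) (nhds 1) :=
  sturmian_top_slow_entropy_general X hinv hsturm
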